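/- arXiv:2012.00202 — 2 statements merged into one kernel-verified Lean document; each statement's English description precedes it below -/
import Mathlib

section
/- Let m, n ≥ 1, let d_1,…,d_m ≥ 1 with d = Σ_{i=1}^m d_i, and let S = (x_1,…,x_n) be a sample of multi-field one-hot feature vectors. Let H be the hypothesis class of field-wise linear models with field-wise variance and mean-norm constraints: for given constants N_1^{(i)}, N_2^{(i)} ≥ 0 (i = 1,…,m), H consists of all functions x ↦ Σ_{i=1}^m x^{(i)ᵀ}(W^{(i)ᵀ} x^{(-i)} + b^{(i)}) with W^{(i)} ∈ ℝ^{(d−d_i)×d_i}, b^{(i)} ∈ ℝ^{d_i} such that ‖W_b^{(i)} − w̄_b^{(i)} 1_{d_i}ᵀ‖_F ≤ N_1^{(i)} and ‖w̄_b^{(i)}‖ ≤ N_2^{(i)} for every i. Then the empirical Rademacher complexity of H over S satisfies R̂_S(H) ≤ √(m/n) · Σ_{i=1}^m (N_1^{(i)} + N_2^{(i)}). -/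
open scoped BigOperators

/-- Index type for the feature blocks of all fields other than field `i`:
an element `⟨⟨i',_⟩,k⟩` picks the `k`-th coordinate of the `i'`-th block, `i' ≠ i`.
This realizes the `(d − d_i)`-dimensional vector `x^{(-i)}`. -/
abbrev RestIdx (m : ℕ) (d : Fin m → ℕ) (i : Fin m) : Type :=
  (i' : {j' : Fin m // j' ≠ i}) × Fin (d i'.1)

/-- `v` is one-hot: entries in `{0,1}` summing to `1`. -/
def IsOneHot {q : ℕ} (v : Fin q → ℝ) : Prop :=
  (∀ k, v k = 0 ∨ v k = 1) ∧ ∑ k, v k = 1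

/-- The Rademacher sign (`±1`-valued) associated with `σ : Fin n → Bool`. -/
noncomputable def signv {n : ℕ} (σ : Fin n → Bool) (j : Fin n) : ℝ :=
  if σ j then 1 else -1

/-- The field-wise linear decision score
`Σ_i x^{(i)ᵀ}(W^{(i)ᵀ} x^{(-i)} + b^{(i)})` of a multi-field feature vector `x`. -/
noncomputable def fieldScore {m : ℕ} {d : Fin m → ℕ}
    (W : (i : Fin m) → RestIdx m d i → Fin (d i) → ℝ)
    (b : (i : Fin m) → Fin (d i) → ℝ)
    (x : (i : Fin m) → Fin (d i) → ℝ) : ℝ :=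
  ∑ i : Fin m, ∑ k : Fin (d i),
    x i k * ((∑ rr : RestIdx m d i, W i rr k * x rr.1.1 rr.2) + b i k)

/-- The augmented matrix `W_b = [W; bᵀ]`: the `none` row is the bias row. -/
def augment {R K : Type*} (W : R → K → ℝ) (b : K → ℝ) : Option R → K → ℝ :=
  fun o k => o.elim (b k) fun rr => W rr k

/-- Frobenius norm of `A` after subtracting the column average from every column,
i.e. `‖A − Ā 1ᵀ‖_F`. -/
noncomputable def centeredFrobNorm {I J : Type*} [Fintype I] [Fintype J]
    (A : I → J → ℝ) : ℝ :=
  Real.sqrt (∑ o : I, ∑ k : J,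
    (A o k - (∑ k' : J, A o k') / (Fintype.card J : ℝ)) ^ 2)

/-- Norm of the column average of `A`, i.e. `‖Ā‖`. -/
noncomputable def colMeanNorm {I J : Type*} [Fintype I] [Fintype J]
    (A : I → J → ℝ) : ℝ :=
  Real.sqrt (∑ o : I, ((∑ k' : J, A o k') / (Fintype.card J : ℝ)) ^ 2)

/-- Field-wise variance and mean-norm constraints
`‖W_b^{(i)} − w̄_b^{(i)} 1ᵀ‖_F ≤ N₁^{(i)}` and `‖w̄_b^{(i)}‖ ≤ N₂^{(i)}`. -/
def FieldwiseConstraint {m : ℕ} {d : Fin m → ℕ} (N1 N2 : Fin m → ℝ)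
    (W : (i : Fin m) → RestIdx m d i → Fin (d i) → ℝ)
    (b : (i : Fin m) → Fin (d i) → ℝ) : Prop :=
  ∀ i : Fin m,
    centeredFrobNorm (augment (W i) (b i)) ≤ N1 i ∧
    colMeanNorm (augment (W i) (b i)) ≤ N2 i

/-! ### Auxiliary machinery -/

lemma rad_cs_card {ι : Type*} [Fintype ι] (f : ι → ℝ) :
    ∑ a, f a ≤ Real.sqrt (Fintype.card ι) * Real.sqrt (∑ a, f a ^ 2) := by
  have h := Real.sum_mul_le_sqrt_mul_sqrt Finset.univ (fun _ : ι => (1 : ℝ)) f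
  simpa [Finset.card_univ] using h

lemma rad_cs {ι : Type*} [Fintype ι] (f g : ι → ℝ) :
    ∑ a, f a * g a ≤ Real.sqrt (∑ a, f a ^ 2) * Real.sqrt (∑ a, g a ^ 2) :=
  Real.sum_mul_le_sqrt_mul_sqrt Finset.univ f g

lemma rad_sign_mul_self {n : ℕ} (σ : Fin n → Bool) (j : Fin n) :
    signv σ j * signv σ j = 1 := by
  unfold signv; by_cases h : σ j <;> simp [h]

lemma rad_sign_orth {n : ℕ} (j j' : Fin n) (h : j ≠ j') :
    ∑ σ : Fin n → Bool, signv σ j * signv σ j' = 0 := by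
  have hinv : Function.Involutive (fun σ : Fin n → Bool => Function.update σ j (!σ j)) := by
    intro σ; funext t
    by_cases ht : t = j
    · subst ht; simp
    · simp [Function.update_of_ne ht]
  set e : Equiv.Perm (Fin n → Bool) := hinv.toPerm _ with he
  have h2 : ∀ σ, signv (e σ) j * signv (e σ) j' = -(signv σ j * signv σ j') := by
    intro σ
    have hj : signv (e σ) j = -(signv σ j) := by
      simp only [he, Function.Involutive.coe_toPerm, signv, Function.update_self]
      by_cases hb : σ j <;> simp [hb]
    have hj' : signv (e σ) j' = signv σ j' := by
      simp only [he, Function.Involutive.coe_toPerm, signv,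
        Function.update_of_ne (Ne.symm h)]
    rw [hj, hj']; ring
  have h3 : ∑ σ : Fin n → Bool, signv σ j * signv σ j'
      = -∑ σ : Fin n → Bool, signv σ j * signv σ j' := by
    conv_lhs => rw [← Equiv.sum_comp e (fun σ => signv σ j * signv σ j')]
    rw [Finset.sum_congr rfl (fun σ _ => h2 σ), ← Finset.sum_neg_distrib]
  linarith

lemma rad_sign_sum {n : ℕ} (j j' : Fin n) :
    ∑ σ : Fin n → Bool, signv σ j * signv σ j' = if j = j' then (2 ^ n : ℝ) else 0 := by
  by_cases h : j = j'
  · subst h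
    simp [rad_sign_mul_self, Finset.sum_const, Finset.card_univ]
  · rw [if_neg h]; exact rad_sign_orth j j' h

lemma rad_sum_sq_sign {n : ℕ} (c : Fin n → ℝ) :
    ∑ σ : Fin n → Bool, (∑ j, signv σ j * c j) ^ 2 = 2 ^ n * ∑ j, c j ^ 2 := by
  have expand : ∀ σ : Fin n → Bool, (∑ j, signv σ j * c j) ^ 2
      = ∑ j, ∑ j', (c j * c j') * (signv σ j * signv σ j') := by
    intro σ
    rw [sq, Finset.sum_mul_sum]
    exact Finset.sum_congr rfl fun j _ => Finset.sum_congr rfl fun j' _ => by ring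
  rw [Finset.sum_congr rfl fun σ _ => expand σ, Finset.sum_comm]
  have h1 : ∀ j : Fin n, ∑ σ : Fin n → Bool, ∑ j', (c j * c j') * (signv σ j * signv σ j')
      = 2 ^ n * c j ^ 2 := by
    intro j
    rw [Finset.sum_comm]
    have h2 : ∀ j' : Fin n, ∑ σ : Fin n → Bool, (c j * c j') * (signv σ j * signv σ j')
        = (c j * c j') * (if j = j' then (2 ^ n : ℝ) else 0) := by
      intro j'; rw [← Finset.mul_sum, rad_sign_sum]
    rw [Finset.sum_congr rfl fun j' _ => h2 j', Finset.sum_eq_single j]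
    · simp; ring
    · intro b _ hb; rw [if_neg (fun hh => hb hh.symm), mul_zero]
    · intro hj; exact absurd (Finset.mem_univ j) hj
  rw [Finset.sum_congr rfl fun j _ => h1 j, ← Finset.mul_sum]

/-- The augmented rest-feature vector `(x^{(-i)}, 1)`. -/
noncomputable def Xv {m n : ℕ} {d : Fin m → ℕ}
    (x : Fin n → (i : Fin m) → Fin (d i) → ℝ) (i : Fin m) (j : Fin n) :
    Option (RestIdx m d i) → ℝ :=
  fun o => o.elim 1 fun rr => x j rr.1.1 rr.2

/-- `T^{(i)}(σ) = Σ_j σ_j (x_j^{(-i)},1) (x_j^{(i)})ᵀ`. -/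
noncomputable def Tv {m n : ℕ} {d : Fin m → ℕ}
    (x : Fin n → (i : Fin m) → Fin (d i) → ℝ) (σ : Fin n → Bool) (i : Fin m)
    (o : Option (RestIdx m d i)) (k : Fin (d i)) : ℝ :=
  ∑ j, signv σ j * (x j i k * Xv x i j o)

/-- `u^{(i)}(σ) = Σ_j σ_j (x_j^{(-i)},1)`. -/
noncomputable def Uv {m n : ℕ} {d : Fin m → ℕ}
    (x : Fin n → (i : Fin m) → Fin (d i) → ℝ) (σ : Fin n → Bool) (i : Fin m)
    (o : Option (RestIdx m d i)) : ℝ :=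
  ∑ j, signv σ j * Xv x i j o

noncomputable def TN {m n : ℕ} {d : Fin m → ℕ}
    (x : Fin n → (i : Fin m) → Fin (d i) → ℝ) (σ : Fin n → Bool) (i : Fin m) : ℝ :=
  Real.sqrt (∑ o : Option (RestIdx m d i), ∑ k, (Tv x σ i o k) ^ 2)

noncomputable def UN {m n : ℕ} {d : Fin m → ℕ}
    (x : Fin n → (i : Fin m) → Fin (d i) → ℝ) (σ : Fin n → Bool) (i : Fin m) : ℝ :=
  Real.sqrt (∑ o : Option (RestIdx m d i), (Uv x σ i o) ^ 2)

lemma rad_rearrange {m n : ℕ} {d : Fin m → ℕ}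
    (x : Fin n → (i : Fin m) → Fin (d i) → ℝ)
    (W : (i : Fin m) → RestIdx m d i → Fin (d i) → ℝ)
    (b : (i : Fin m) → Fin (d i) → ℝ) (σ : Fin n → Bool) :
    ∑ j, signv σ j * fieldScore W b (x j)
      = ∑ i, ∑ o : Option (RestIdx m d i), ∑ k,
          augment (W i) (b i) o k * Tv x σ i o k := by
  have step1 : ∀ j, signv σ j * fieldScore W b (x j)
      = ∑ i, ∑ k, ∑ o : Option (RestIdx m d i),
          augment (W i) (b i) o k * (signv σ j * (x j i k * Xv x i j o)) := by
    intro j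
    unfold fieldScore
    rw [Finset.mul_sum]
    refine Finset.sum_congr rfl fun i _ => ?_
    rw [Finset.mul_sum]
    refine Finset.sum_congr rfl fun k _ => ?_
    rw [Fintype.sum_option]
    simp only [augment, Option.elim, Xv]
    rw [show ∑ rr : RestIdx m d i, W i rr k * (signv σ j * (x j i k * x j rr.1.1 rr.2))
        = signv σ j * (x j i k * ∑ rr : RestIdx m d i, W i rr k * x j rr.1.1 rr.2) from ?_]
    · ring
    · rw [Finset.mul_sum, Finset.mul_sum]
      exact Finset.sum_congr rfl fun rr _ => by ring
  rw [Finset.sum_congr rfl fun j _ => step1 j, Finset.sum_comm]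
  refine Finset.sum_congr rfl fun i _ => ?_
  rw [Finset.sum_comm]
  have hk : ∀ k : Fin (d i), ∑ j : Fin n, ∑ o : Option (RestIdx m d i),
      augment (W i) (b i) o k * (signv σ j * (x j i k * Xv x i j o))
      = ∑ o : Option (RestIdx m d i), ∑ j : Fin n,
      augment (W i) (b i) o k * (signv σ j * (x j i k * Xv x i j o)) :=
    fun k => Finset.sum_comm
  rw [Finset.sum_congr rfl fun k _ => hk k, Finset.sum_comm]
  refine Finset.sum_congr rfl fun o _ => Finset.sum_congr rfl fun k _ => ?_
  rw [Tv, ← Finset.mul_sum]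

lemma onehot_sq_sum {q : ℕ} {v : Fin q → ℝ} (hv : IsOneHot v) : ∑ k, v k ^ 2 = 1 := by
  have h : ∀ k, v k ^ 2 = v k := fun k => by rcases hv.1 k with h | h <;> simp [h]
  rw [Finset.sum_congr rfl fun k _ => h k, hv.2]

lemma Xv_sq_sum {m n : ℕ} {d : Fin m → ℕ} (hm : 1 ≤ m)
    (x : Fin n → (i : Fin m) → Fin (d i) → ℝ)
    (hx : ∀ j i, IsOneHot (x j i)) (i : Fin m) (j : Fin n) :
    ∑ o : Option (RestIdx m d i), (Xv x i j o) ^ 2 = (m : ℝ) := by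
  rw [Fintype.sum_option]
  simp only [Xv, Option.elim]
  rw [← Finset.univ_sigma_univ, Finset.sum_sigma]
  have h1 : ∀ i' : {j' : Fin m // j' ≠ i},
      ∑ k : Fin (d i'.1), (x j i'.1 k) ^ 2 = 1 := fun i' => onehot_sq_sum (hx j i'.1)
  rw [Finset.sum_congr rfl fun i' _ => h1 i']
  rw [Finset.sum_const, Finset.card_univ]
  have hcard : Fintype.card {j' : Fin m // j' ≠ i} = m - 1 := by
    simp [Fintype.card_subtype_compl, Fintype.card_fin]
  rw [hcard]
  have hc : ((m - 1 : ℕ) : ℝ) = (m : ℝ) - 1 := by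
    rw [Nat.cast_sub hm]; simp
  rw [nsmul_eq_mul, hc]; ring

lemma rad_pointwise {m n : ℕ} {d : Fin m → ℕ}
    (x : Fin n → (i : Fin m) → Fin (d i) → ℝ)
    (hx : ∀ j i, IsOneHot (x j i)) (N1 N2 : Fin m → ℝ)
    (W : (i : Fin m) → RestIdx m d i → Fin (d i) → ℝ)
    (b : (i : Fin m) → Fin (d i) → ℝ)
    (hWb : FieldwiseConstraint N1 N2 W b) (σ : Fin n → Bool) :
    ∑ j, signv σ j * fieldScore W b (x j)
      ≤ ∑ i, (N1 i * TN x σ i + N2 i * UN x σ i) := by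
  rw [rad_rearrange x W b σ]
  refine Finset.sum_le_sum fun i _ => ?_
  set A : Option (RestIdx m d i) → Fin (d i) → ℝ := augment (W i) (b i) with hA
  set ab : Option (RestIdx m d i) → ℝ :=
    fun o => (∑ k', A o k') / (Fintype.card (Fin (d i)) : ℝ) with hab
  have hU : ∀ o, ∑ k, Tv x σ i o k = Uv x σ i o := by
    intro o
    unfold Tv Uv
    rw [Finset.sum_comm]
    refine Finset.sum_congr rfl fun j _ => ?_
    have h1 : ∀ k, signv σ j * (x j i k * Xv x i j o)
        = (signv σ j * Xv x i j o) * x j i k := fun k => by ring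
    rw [Finset.sum_congr rfl fun k _ => h1 k, ← Finset.mul_sum, (hx j i).2, mul_one]
  have split : ∑ o, ∑ k, A o k * Tv x σ i o k
      = (∑ o, ∑ k, (A o k - ab o) * Tv x σ i o k) + ∑ o, ab o * Uv x σ i o := by
    rw [← Finset.sum_add_distrib]
    refine Finset.sum_congr rfl fun o _ => ?_
    rw [← hU o, Finset.mul_sum, ← Finset.sum_add_distrib]
    exact Finset.sum_congr rfl fun k _ => by ring
  rw [split]
  have h1 : ∑ o, ∑ k, (A o k - ab o) * Tv x σ i o k ≤ N1 i * TN x σ i := by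
    have hcs := rad_cs (fun p : Option (RestIdx m d i) × Fin (d i) => A p.1 p.2 - ab p.1)
        (fun p => Tv x σ i p.1 p.2)
    simp only [Fintype.sum_prod_type] at hcs
    refine hcs.trans ?_
    have e1 : Real.sqrt (∑ o, ∑ k, (A o k - ab o) ^ 2) = centeredFrobNorm A := rfl
    have e2 : Real.sqrt (∑ o, ∑ k, (Tv x σ i o k) ^ 2) = TN x σ i := rfl
    rw [e1, e2]
    exact mul_le_mul_of_nonneg_right (hWb i).1 (Real.sqrt_nonneg _)
  have h2 : ∑ o, ab o * Uv x σ i o ≤ N2 i * UN x σ i := by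
    have hcs := rad_cs (fun o : Option (RestIdx m d i) => ab o) (fun o => Uv x σ i o)
    refine hcs.trans ?_
    have e1 : Real.sqrt (∑ o, ab o ^ 2) = colMeanNorm A := rfl
    have e2 : Real.sqrt (∑ o, (Uv x σ i o) ^ 2) = UN x σ i := rfl
    rw [e1, e2]
    exact mul_le_mul_of_nonneg_right (hWb i).2 (Real.sqrt_nonneg _)
  exact add_le_add h1 h2

lemma rad_TN_exp {m n : ℕ} {d : Fin m → ℕ} (hm : 1 ≤ m)
    (x : Fin n → (i : Fin m) → Fin (d i) → ℝ)
    (hx : ∀ j i, IsOneHot (x j i)) (i : Fin m) :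
    ∑ σ : Fin n → Bool, (TN x σ i) ^ 2 = 2 ^ n * ((n : ℝ) * m) := by
  have h0 : ∀ σ : Fin n → Bool, (TN x σ i) ^ 2 = ∑ o, ∑ k, (Tv x σ i o k) ^ 2 := by
    intro σ; unfold TN; rw [Real.sq_sqrt]; positivity
  rw [Finset.sum_congr rfl fun σ _ => h0 σ, Finset.sum_comm]
  have h1 : ∀ o : Option (RestIdx m d i), ∑ σ : Fin n → Bool, ∑ k, (Tv x σ i o k) ^ 2
      = ∑ k, ∑ σ : Fin n → Bool, (Tv x σ i o k) ^ 2 := fun o => Finset.sum_comm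
  rw [Finset.sum_congr rfl fun o _ => h1 o]
  have h2 : ∀ (o : Option (RestIdx m d i)) (k : Fin (d i)),
      ∑ σ : Fin n → Bool, (Tv x σ i o k) ^ 2
        = 2 ^ n * ∑ j, (x j i k * Xv x i j o) ^ 2 :=
    fun o k => rad_sum_sq_sign (fun j => x j i k * Xv x i j o)
  rw [Finset.sum_congr rfl fun o _ => Finset.sum_congr rfl fun k _ => h2 o k]
  have h3 : ∑ o : Option (RestIdx m d i), ∑ k, (2 : ℝ) ^ n * ∑ j, (x j i k * Xv x i j o) ^ 2
      = 2 ^ n * ∑ o : Option (RestIdx m d i), ∑ k, ∑ j, (x j i k * Xv x i j o) ^ 2 := by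
    rw [Finset.mul_sum]
    exact Finset.sum_congr rfl fun o _ => (Finset.mul_sum _ _ _).symm
  rw [h3]
  congr 1
  have h4 : ∀ o : Option (RestIdx m d i), ∑ k, ∑ j : Fin n, (x j i k * Xv x i j o) ^ 2
      = ∑ j : Fin n, ∑ k, (x j i k * Xv x i j o) ^ 2 := fun o => Finset.sum_comm
  rw [Finset.sum_congr rfl fun o _ => h4 o, Finset.sum_comm]
  have h5 : ∀ j : Fin n, ∑ o : Option (RestIdx m d i), ∑ k, (x j i k * Xv x i j o) ^ 2
      = (m : ℝ) := by
    intro j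
    have h6 : ∀ o : Option (RestIdx m d i), ∑ k, (x j i k * Xv x i j o) ^ 2
        = (Xv x i j o) ^ 2 := by
      intro o
      have h7 : ∀ k, (x j i k * Xv x i j o) ^ 2 = (x j i k) ^ 2 * (Xv x i j o) ^ 2 :=
        fun k => by ring
      rw [Finset.sum_congr rfl fun k _ => h7 k, ← Finset.sum_mul,
        onehot_sq_sum (hx j i), one_mul]
    rw [Finset.sum_congr rfl fun o _ => h6 o, Xv_sq_sum hm x hx i j]
  rw [Finset.sum_congr rfl fun j _ => h5 j, Finset.sum_const, Finset.card_univ,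
    Fintype.card_fin, nsmul_eq_mul]

lemma rad_UN_exp {m n : ℕ} {d : Fin m → ℕ} (hm : 1 ≤ m)
    (x : Fin n → (i : Fin m) → Fin (d i) → ℝ)
    (hx : ∀ j i, IsOneHot (x j i)) (i : Fin m) :
    ∑ σ : Fin n → Bool, (UN x σ i) ^ 2 = 2 ^ n * ((n : ℝ) * m) := by
  have h0 : ∀ σ : Fin n → Bool, (UN x σ i) ^ 2 = ∑ o, (Uv x σ i o) ^ 2 := by
    intro σ; unfold UN; rw [Real.sq_sqrt]; positivity
  rw [Finset.sum_congr rfl fun σ _ => h0 σ, Finset.sum_comm]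
  have h2 : ∀ o : Option (RestIdx m d i), ∑ σ : Fin n → Bool, (Uv x σ i o) ^ 2
      = 2 ^ n * ∑ j, (Xv x i j o) ^ 2 :=
    fun o => rad_sum_sq_sign (fun j => Xv x i j o)
  rw [Finset.sum_congr rfl fun o _ => h2 o, ← Finset.mul_sum]
  congr 1
  rw [Finset.sum_comm]
  rw [Finset.sum_congr rfl fun j _ => Xv_sq_sum hm x hx i j, Finset.sum_const,
    Finset.card_univ, Fintype.card_fin, nsmul_eq_mul]

lemma rad_sqrt_card {n : ℕ} : ((Fintype.card (Fin n → Bool) : ℕ) : ℝ) = 2 ^ n := by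
  simp [Fintype.card_fun]

lemma rad_norm_sum_le {m n : ℕ} (f : (Fin n → Bool) → ℝ)
    (hsq : ∑ σ : Fin n → Bool, f σ ^ 2 = 2 ^ n * ((n : ℝ) * m)) :
    ∑ σ : Fin n → Bool, f σ ≤ 2 ^ n * Real.sqrt ((n : ℝ) * m) := by
  have h := rad_cs_card f
  rw [hsq, rad_sqrt_card] at h
  refine h.trans (le_of_eq ?_)
  rw [← Real.sqrt_mul (by positivity),
    show (2 : ℝ) ^ n * (2 ^ n * ((n : ℝ) * m)) = ((2 : ℝ) ^ n) ^ 2 * ((n : ℝ) * m) by ring,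
    Real.sqrt_mul (by positivity), Real.sqrt_sq (by positivity)]

/-- the empirical Rademacher complexity of the class of field-wise
linear models with field-wise variance and mean-norm constraints, over a sample
of `n` multi-field one-hot feature vectors, is at most
`√(m/n) · Σ_i (N₁^{(i)} + N₂^{(i)})`. -/
theorem rademacher_complexity_fieldwise_linear_le
    (m n : ℕ) (hm : 1 ≤ m) (hn : 1 ≤ n)
    (d : Fin m → ℕ) (hd : ∀ i, 1 ≤ d i)
    (N1 N2 : Fin m → ℝ) (hN1 : ∀ i, 0 ≤ N1 i) (hN2 : ∀ i, 0 ≤ N2 i)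
    (x : Fin n → (i : Fin m) → Fin (d i) → ℝ)
    (hx : ∀ j i, IsOneHot (x j i)) :
    (∑ σ : Fin n → Bool,
        sSup {r : ℝ |
          ∃ (W : (i : Fin m) → RestIdx m d i → Fin (d i) → ℝ)
            (b : (i : Fin m) → Fin (d i) → ℝ),
            FieldwiseConstraint N1 N2 W b ∧
            r = (1 / (n : ℝ)) * ∑ j : Fin n, signv σ j * fieldScore W b (x j)}) / 2 ^ n
      ≤ Real.sqrt ((m : ℝ) / (n : ℝ)) * ∑ i : Fin m, (N1 i + N2 i) := by
  have hn0 : (0 : ℝ) < n := by exact_mod_cast hn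
  have hsup : ∀ σ : Fin n → Bool,
      sSup {r : ℝ |
          ∃ (W : (i : Fin m) → RestIdx m d i → Fin (d i) → ℝ)
            (b : (i : Fin m) → Fin (d i) → ℝ),
            FieldwiseConstraint N1 N2 W b ∧
            r = (1 / (n : ℝ)) * ∑ j : Fin n, signv σ j * fieldScore W b (x j)}
        ≤ (1 / (n : ℝ)) * ∑ i, (N1 i * TN x σ i + N2 i * UN x σ i) := by
    intro σ
    refine Real.sSup_le ?_ ?_
    · rintro r ⟨W, b, hWb, rfl⟩
      exact mul_le_mul_of_nonneg_left (rad_pointwise x hx N1 N2 W b hWb σ) (by positivity)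
    · refine mul_nonneg (by positivity) (Finset.sum_nonneg fun i _ => add_nonneg
        (mul_nonneg (hN1 i) (Real.sqrt_nonneg _))
        (mul_nonneg (hN2 i) (Real.sqrt_nonneg _)))
  have hsum : ∑ σ : Fin n → Bool,
      sSup {r : ℝ |
          ∃ (W : (i : Fin m) → RestIdx m d i → Fin (d i) → ℝ)
            (b : (i : Fin m) → Fin (d i) → ℝ),
            FieldwiseConstraint N1 N2 W b ∧
            r = (1 / (n : ℝ)) * ∑ j : Fin n, signv σ j * fieldScore W b (x j)}
      ≤ ∑ σ : Fin n → Bool,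
          (1 / (n : ℝ)) * ∑ i, (N1 i * TN x σ i + N2 i * UN x σ i) :=
    Finset.sum_le_sum fun σ _ => hsup σ
  have hG : ∑ σ : Fin n → Bool,
      (1 / (n : ℝ)) * ∑ i, (N1 i * TN x σ i + N2 i * UN x σ i)
      ≤ (1 / (n : ℝ)) * ((2 ^ n * Real.sqrt ((n : ℝ) * m)) * ∑ i, (N1 i + N2 i)) := by
    rw [← Finset.mul_sum]
    refine mul_le_mul_of_nonneg_left ?_ (by positivity)
    rw [Finset.sum_comm]
    have hT : ∀ i, ∑ σ : Fin n → Bool, TN x σ i ≤ 2 ^ n * Real.sqrt ((n : ℝ) * m) :=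
      fun i => rad_norm_sum_le _ (rad_TN_exp hm x hx i)
    have hUb : ∀ i, ∑ σ : Fin n → Bool, UN x σ i ≤ 2 ^ n * Real.sqrt ((n : ℝ) * m) :=
      fun i => rad_norm_sum_le _ (rad_UN_exp hm x hx i)
    calc ∑ i, ∑ σ : Fin n → Bool, (N1 i * TN x σ i + N2 i * UN x σ i)
        = ∑ i, (N1 i * ∑ σ : Fin n → Bool, TN x σ i
            + N2 i * ∑ σ : Fin n → Bool, UN x σ i) := by
          refine Finset.sum_congr rfl fun i _ => ?_
          rw [Finset.sum_add_distrib, ← Finset.mul_sum, ← Finset.mul_sum]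
      _ ≤ ∑ i, (N1 i + N2 i) * (2 ^ n * Real.sqrt ((n : ℝ) * m)) := by
          refine Finset.sum_le_sum fun i _ => ?_
          have t1 := mul_le_mul_of_nonneg_left (hT i) (hN1 i)
          have t2 := mul_le_mul_of_nonneg_left (hUb i) (hN2 i)
          nlinarith
      _ = (2 ^ n * Real.sqrt ((n : ℝ) * m)) * ∑ i, (N1 i + N2 i) := by
          rw [← Finset.sum_mul]; ring
  have h2n : (0 : ℝ) < 2 ^ n := by positivity
  rw [div_le_iff₀ h2n]
  refine (hsum.trans hG).trans (le_of_eq ?_)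
  have hsq : Real.sqrt ((m : ℝ) / n) = Real.sqrt ((n : ℝ) * m) / n := by
    rw [show (m : ℝ) / (n : ℝ) = ((n : ℝ) * m) / ((n : ℝ) ^ 2) by field_simp,
      Real.sqrt_div (by positivity), Real.sqrt_sq hn0.le]
  rw [hsq]
  field_simp
end

section
/- Let m ≥ 1, and for j = 1,…,n let v_j ∈ ℝ^p have entries in {0,1} with exactly m entries equal to 1 and let u_j ∈ ℝ^q be a one-hot vector. Fix constants N_1, N_2 ≥ 0 and let W range over the set of matrices W ∈ ℝ^{p×q} such that ‖W − w̄(W) 1_qᵀ‖_F ≤ N_1 and ‖w̄(W)‖ ≤ N_2, where w̄(W) ∈ ℝ^p is the column average of W. Let σ = (σ_1,…,σ_n) be uniform on {−1,+1}^n. Then E_σ[ sup_W Σ_{j=1}^n σ_j ⟨W, v_j u_jᵀ⟩_F ] ≤ (N_1 + N_2) √(mn). -/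
/-!
Write `εⱼ = ±1` for the signs, `A = ∑ⱼ εⱼ vⱼ uⱼᵀ` and `y = ∑ⱼ εⱼ vⱼ`; since every `uⱼ` sums
to one, `y` is the vector of row sums of `A`. The value of the process at `W` is `⟨W, A⟩_F`, and
splitting `W = (W - w̄ 1ᵀ) + w̄ 1ᵀ` turns it into `⟨W - w̄ 1ᵀ, A⟩_F + ⟨w̄, y⟩`, so Cauchy–Schwarz
bounds the supremum by `N₁ ‖A‖_F + N₂ ‖y‖`. The signs are orthogonal, hence
`E ‖A‖_F² = ∑ⱼ ‖vⱼ‖² ‖uⱼ‖² = mn` and `E ‖y‖² = ∑ⱼ ‖vⱼ‖² = mn`, and Jensen's inequality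
`E √X ≤ √(E X)` finishes the proof.
-/

open Finset

def boolSign (b : Bool) : ℝ := if b then 1 else -1

@[simp]
lemma boolSign_mul_self (b : Bool) : boolSign b * boolSign b = 1 := by
  cases b <;> norm_num [boolSign]

@[simp]
lemma boolSign_not (b : Bool) : boolSign (!b) = -boolSign b := by
  cases b <;> simp [boolSign]

def rademacherSum {ι κ : Type*} [Fintype ι] (a : ι → κ → ℝ) (σ : ι → Bool) (k : κ) : ℝ :=
  ∑ j, boolSign (σ j) * a j k

def rademacherOuterSum {ι κ ν : Type*} [Fintype ι] (v : ι → κ → ℝ) (u : ι → ν → ℝ)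
    (σ : ι → Bool) (k : κ) (l : ν) : ℝ :=
  ∑ j, boolSign (σ j) * (v j k * u j l)

lemma sum_rademacherOuterSum_eq_rademacherSum {ι κ ν : Type*} [Fintype ι] [Fintype ν]
    {v : ι → κ → ℝ} {u : ι → ν → ℝ} (hu : ∀ j, ∑ l, u j l = 1) (σ : ι → Bool) (k : κ) :
    ∑ l, rademacherOuterSum v u σ k l = rademacherSum v σ k := by
  simp only [rademacherOuterSum, rademacherSum]
  rw [sum_comm]
  simp [← mul_sum, hu]

lemma sum_boolSign_mul_frobenius_eq {ι κ ν : Type*} [Fintype ι] [Fintype κ] [Fintype ν]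
    (v : ι → κ → ℝ) (u : ι → ν → ℝ) (σ : ι → Bool) (W : κ → ν → ℝ) :
    ∑ j, boolSign (σ j) * ∑ k, ∑ l, W k l * (v j k * u j l)
      = ∑ k, ∑ l, W k l * rademacherOuterSum v u σ k l := by
  simp only [rademacherOuterSum, mul_sum]
  rw [sum_comm]
  refine sum_congr rfl fun k _ => ?_
  rw [sum_comm]
  exact sum_congr rfl fun l _ => sum_congr rfl fun j _ => by ring

section Orthogonality

variable {ι : Type*} [Fintype ι] [DecidableEq ι]

lemma sum_boolSign_mul_boolSign_of_ne {i j : ι} (hij : i ≠ j) :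
    ∑ σ : ι → Bool, boolSign (σ i) * boolSign (σ j) = 0 := by
  have hflip : Function.Involutive fun σ : ι → Bool => Function.update σ i (!σ i) := by
    intro σ
    ext k
    by_cases hk : k = i
    · subst hk; simp
    · simp [Function.update_of_ne hk]
  have hsum := Fintype.sum_equiv hflip.toPerm (fun σ => boolSign (σ i) * boolSign (σ j))
    (fun σ => -(boolSign (σ i) * boolSign (σ j)))
    (fun σ => by simp [Function.update_of_ne hij.symm])
  rw [sum_neg_distrib] at hsum
  linarith

lemma sum_boolSign_mul_boolSign (i j : ι) :
    ∑ σ : ι → Bool, boolSign (σ i) * boolSign (σ j)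
      = if i = j then 2 ^ Fintype.card ι else 0 := by
  split_ifs with hij
  · subst hij
    simp
  · exact sum_boolSign_mul_boolSign_of_ne hij

theorem sum_sq_sum_boolSign_mul (a : ι → ℝ) :
    ∑ σ : ι → Bool, (∑ j, boolSign (σ j) * a j) ^ 2 = 2 ^ Fintype.card ι * ∑ j, a j ^ 2 := by
  calc ∑ σ : ι → Bool, (∑ j, boolSign (σ j) * a j) ^ 2
      = ∑ i, ∑ j, a i * a j * ∑ σ : ι → Bool, boolSign (σ i) * boolSign (σ j) := by
        simp_rw [sq, sum_mul_sum, mul_sum]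
        rw [sum_comm]
        refine sum_congr rfl fun i _ => ?_
        rw [sum_comm]
        exact sum_congr rfl fun j _ => sum_congr rfl fun σ _ => by ring
    _ = 2 ^ Fintype.card ι * ∑ j, a j ^ 2 := by
        simp [sum_boolSign_mul_boolSign, mul_sum, sq, mul_comm]

theorem sum_sum_rademacherSum_sq {κ : Type*} [Fintype κ] (a : ι → κ → ℝ) :
    ∑ σ : ι → Bool, ∑ k, rademacherSum a σ k ^ 2 = 2 ^ Fintype.card ι * ∑ j, ∑ k, a j k ^ 2 := by
  rw [sum_comm, sum_comm (γ := ι)]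
  simp [rademacherSum, sum_sq_sum_boolSign_mul, mul_sum]

theorem sum_sum_sum_rademacherOuterSum_sq {κ ν : Type*} [Fintype κ] [Fintype ν]
    (v : ι → κ → ℝ) (u : ι → ν → ℝ) :
    ∑ σ : ι → Bool, ∑ k, ∑ l, rademacherOuterSum v u σ k l ^ 2
      = 2 ^ Fintype.card ι * ∑ j, (∑ k, v j k ^ 2) * ∑ l, u j l ^ 2 := by
  rw [sum_comm]
  calc ∑ k, ∑ σ : ι → Bool, ∑ l, rademacherOuterSum v u σ k l ^ 2
      = ∑ k, ∑ σ : ι → Bool, ∑ l, rademacherSum (fun j l => v j k * u j l) σ l ^ 2 := rfl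
    _ = _ := by
      simp only [sum_sum_rademacherSum_sq, ← mul_sum, mul_pow, sum_mul_sum]
      rw [sum_comm]

end Orthogonality

lemma sum_sq_eq_sum_of_forall_eq_zero_or_eq_one {κ : Type*} [Fintype κ] {x : κ → ℝ}
    (hx : ∀ k, x k = 0 ∨ x k = 1) : ∑ k, x k ^ 2 = ∑ k, x k :=
  sum_congr rfl fun k _ => by rcases hx k with h | h <;> simp [h]

lemma sum_sqrt_le_card_mul_sqrt {Ω : Type*} [Fintype Ω] {f : Ω → ℝ} (hf : ∀ ω, 0 ≤ f ω)
    {M : ℝ} (hM : ∑ ω, f ω = Fintype.card Ω * M) : ∑ ω, √(f ω) ≤ Fintype.card Ω * √M := by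
  have hsq : (∑ ω, √(f ω)) ^ 2 ≤ (Fintype.card Ω : ℝ) ^ 2 * M := by
    calc (∑ ω, √(f ω)) ^ 2 ≤ Fintype.card Ω * ∑ ω, √(f ω) ^ 2 := sq_sum_le_card_mul_sum_sq
      _ = (Fintype.card Ω : ℝ) ^ 2 * M := by simp [Real.sq_sqrt (hf _), hM]; ring
  calc ∑ ω, √(f ω) ≤ √((Fintype.card Ω : ℝ) ^ 2 * M) := Real.le_sqrt_of_sq_le hsq
    _ = Fintype.card Ω * √M := by rw [Real.sqrt_mul (by positivity), Real.sqrt_sq (by positivity)]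

lemma sum_sum_mul_le_of_row_shift {κ ν : Type*} [Fintype κ] [Fintype ν] (W A : κ → ν → ℝ)
    (c : κ → ℝ) :
    ∑ k, ∑ l, W k l * A k l
      ≤ √(∑ k, ∑ l, (W k l - c k) ^ 2) * √(∑ k, ∑ l, A k l ^ 2)
        + √(∑ k, c k ^ 2) * √(∑ k, (∑ l, A k l) ^ 2) := by
  have hsplit : ∑ k, ∑ l, W k l * A k l
      = ∑ x : κ × ν, (W x.1 x.2 - c x.1) * A x.1 x.2 + ∑ k, c k * ∑ l, A k l := by
    rw [Fintype.sum_prod_type, ← sum_add_distrib]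
    refine sum_congr rfl fun k _ => ?_
    rw [mul_sum, ← sum_add_distrib]
    exact sum_congr rfl fun l _ => by ring
  rw [hsplit]
  simp only [← Fintype.sum_prod_type' (fun k l => (W k l - c k) ^ 2),
    ← Fintype.sum_prod_type' (fun k l => A k l ^ 2)]
  exact add_le_add (Real.sum_mul_le_sqrt_mul_sqrt _ _ _) (Real.sum_mul_le_sqrt_mul_sqrt _ _ _)

lemma sum_boolSign_mul_frobenius_le {ι κ ν : Type*} [Fintype ι] [Fintype κ] [Fintype ν]
    {v : ι → κ → ℝ} {u : ι → ν → ℝ} (hu : ∀ j, ∑ l, u j l = 1) (σ : ι → Bool)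
    {W : κ → ν → ℝ} {c : κ → ℝ} {N1 N2 : ℝ}
    (hW : √(∑ k, ∑ l, (W k l - c k) ^ 2) ≤ N1 ∧ √(∑ k, c k ^ 2) ≤ N2) :
    ∑ j, boolSign (σ j) * ∑ k, ∑ l, W k l * (v j k * u j l)
      ≤ N1 * √(∑ k, ∑ l, rademacherOuterSum v u σ k l ^ 2)
        + N2 * √(∑ k, rademacherSum v σ k ^ 2) := by
  rw [sum_boolSign_mul_frobenius_eq]
  refine (sum_sum_mul_le_of_row_shift W _ c).trans ?_
  simp only [sum_rademacherOuterSum_eq_rademacherSum hu]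
  gcongr
  exacts [hW.1, hW.2]

theorem expected_sup_rademacher_process_constrained_matrices_le_general
    (m n p q : ℕ)
    (N1 N2 : ℝ) (hN1 : 0 ≤ N1) (hN2 : 0 ≤ N2)
    (v : Fin n → Fin p → ℝ) (u : Fin n → Fin q → ℝ)
    (hv : ∀ j, (∀ k, v j k = 0 ∨ v j k = 1) ∧ ∑ k, v j k = (m : ℝ))
    (hu : ∀ j, (∀ l, u j l = 0 ∨ u j l = 1) ∧ ∑ l, u j l = 1) :
    (∑ σ : Fin n → Bool,
        sSup {t : ℝ | ∃ W : Fin p → Fin q → ℝ,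
          (Real.sqrt (∑ k : Fin p, ∑ l : Fin q,
              (W k l - (∑ l' : Fin q, W k l') / (q : ℝ)) ^ 2) ≤ N1
            ∧ Real.sqrt (∑ k : Fin p, ((∑ l' : Fin q, W k l') / (q : ℝ)) ^ 2) ≤ N2)
          ∧ t = ∑ j : Fin n, (if σ j then (1 : ℝ) else -1) *
                  ∑ k : Fin p, ∑ l : Fin q, W k l * (v j k * u j l)}) / 2 ^ n
      ≤ (N1 + N2) * Real.sqrt ((m : ℝ) * n) := by
  have hcard : (Fintype.card (Fin n → Bool) : ℝ) = 2 ^ n := by simp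
  have hv2 (j : Fin n) : ∑ k, v j k ^ 2 = m := by
    rw [sum_sq_eq_sum_of_forall_eq_zero_or_eq_one (hv j).1, (hv j).2]
  have hu2 (j : Fin n) : ∑ l, u j l ^ 2 = 1 := by
    rw [sum_sq_eq_sum_of_forall_eq_zero_or_eq_one (hu j).1, (hu j).2]
  have hA := sum_sqrt_le_card_mul_sqrt (M := m * n) (fun σ => by positivity)
    (f := fun σ => ∑ k, ∑ l, rademacherOuterSum v u σ k l ^ 2)
    (by simp [sum_sum_sum_rademacherOuterSum_sq, hv2, hu2, mul_comm])
  have hy := sum_sqrt_le_card_mul_sqrt (M := m * n) (fun σ => by positivity)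
    (f := fun σ => ∑ k, rademacherSum v σ k ^ 2)
    (by simp [sum_sum_rademacherSum_sq, hv2, mul_comm])
  rw [hcard] at hA hy
  rw [div_le_iff₀ (by positivity)]
  calc _ ≤ ∑ σ : Fin n → Bool, (N1 * √(∑ k, ∑ l, rademacherOuterSum v u σ k l ^ 2)
        + N2 * √(∑ k, rademacherSum v σ k ^ 2)) := by
        refine sum_le_sum fun σ _ => Real.sSup_le ?_ (by positivity)
        rintro _ ⟨W, hW, rfl⟩
        exact sum_boolSign_mul_frobenius_le (fun j => (hu j).2) σ hW
    _ ≤ (N1 + N2) * √(m * n) * 2 ^ n := by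
        rw [sum_add_distrib, ← mul_sum, ← mul_sum]
        nlinarith [mul_le_mul_of_nonneg_left hA hN1, mul_le_mul_of_nonneg_left hy hN2]

/-- With `v_j` 0/1-vectors having exactly `m ≥ 1` ones, `u_j` one-hot,
and `W` ranging over matrices with centered Frobenius norm `‖W − w̄(W)1ᵀ‖_F ≤ N₁`
and mean-column norm `‖w̄(W)‖ ≤ N₂`, the expected supremum of the Rademacher process
`Σ_j σ_j ⟨W, v_j u_jᵀ⟩_F` is at most `(N₁+N₂)√(mn)`. -/
theorem expected_sup_rademacher_process_constrained_matrices_le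
    (m n p q : ℕ) (hm : 1 ≤ m) (hq : 1 ≤ q)
    (N1 N2 : ℝ) (hN1 : 0 ≤ N1) (hN2 : 0 ≤ N2)
    (v : Fin n → Fin p → ℝ) (u : Fin n → Fin q → ℝ)
    (hv : ∀ j, (∀ k, v j k = 0 ∨ v j k = 1) ∧ ∑ k, v j k = (m : ℝ))
    (hu : ∀ j, (∀ l, u j l = 0 ∨ u j l = 1) ∧ ∑ l, u j l = 1) :
    (∑ σ : Fin n → Bool,
        sSup {t : ℝ | ∃ W : Fin p → Fin q → ℝ,
          (Real.sqrt (∑ k : Fin p, ∑ l : Fin q,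
              (W k l - (∑ l' : Fin q, W k l') / (q : ℝ)) ^ 2) ≤ N1
            ∧ Real.sqrt (∑ k : Fin p, ((∑ l' : Fin q, W k l') / (q : ℝ)) ^ 2) ≤ N2)
          ∧ t = ∑ j : Fin n, (if σ j then (1 : ℝ) else -1) *
                  ∑ k : Fin p, ∑ l : Fin q, W k l * (v j k * u j l)}) / 2 ^ n
      ≤ (N1 + N2) * Real.sqrt ((m : ℝ) * n) :=
  expected_sup_rademacher_process_constrained_matrices_le_general m n p q N1 N2 hN1 hN2 v u hv hu
end
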